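/- Let X = X₁ ∘ X₂ be a joint distribution where X₁ takes values in {0,1}^ℓ, and let ρ be an encoding with H∞(X;ρ) ≥ k. For a prefix x₁, let ρ_{x₁} be the encoding of the conditional distribution X₂ | X₁ = x₁ given by ρ_{x₁}(x₂) = ρ(x₁ ∘ x₂). Call x₁ bad if H∞(X₂ | X₁ = x₁ ; ρ_{x₁}) ≤ r. Then Pr[X₁ is bad] ≤ 2^ℓ · 2^r · 2^{-k}. -/

import Mathlib

/-!
Guess the prefix `x₁` uniformly at random and then apply a near-optimal measurement for the
conditional encoding `ρ_{x₁}`. This is a single measurement on `ρ`, succeeding with probability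
`2^{-ℓ} ∑_{x₁} Pr[X₁ = x₁] · guessProb(X₂ | X₁ = x₁; ρ_{x₁})`, so that sum is at most
`2^ℓ · 2^{-k}`. A bad prefix has `guessProb ≥ 2^{-r}`, so it contributes at least
`Pr[X₁ = x₁] · 2^{-r}`.
-/

open scoped BigOperators ComplexOrder

namespace QExt

/-- Bit strings of length `n`. -/
abbrev BS (n : ℕ) := Fin n → Bool

/-- Trace norm of a complex matrix: `Tr √(AᴴA)` (sum of singular values;
for Hermitian `A` this is the sum of the absolute values of the eigenvalues). -/
noncomputable def posSemidefSqrt {ι : Type} [Fintype ι] [DecidableEq ι]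
    {A : Matrix ι ι ℂ} (hA : A.PosSemidef) : Matrix ι ι ℂ :=
  hA.1.eigenvectorUnitary.1 * Matrix.diagonal ((↑) ∘ (√·) ∘ hA.1.eigenvalues) *
    (star hA.1.eigenvectorUnitary : Matrix ι ι ℂ)

noncomputable def traceNorm {ι : Type} [Fintype ι] [DecidableEq ι]
    (A : Matrix ι ι ℂ) : ℝ :=
  ((posSemidefSqrt (Matrix.posSemidef_conjTranspose_mul_self A)).trace).re

/-- Trace distance between two matrices. -/
noncomputable def traceDist {ι : Type} [Fintype ι] [DecidableEq ι]
    (A B : Matrix ι ι ℂ) : ℝ :=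
  traceNorm (A - B) / 2

/-- A density matrix: positive semidefinite with trace 1. -/
def IsDensity {ι : Type} [Fintype ι] [DecidableEq ι] (ρ : Matrix ι ι ℂ) : Prop :=
  ρ.PosSemidef ∧ ρ.trace = 1

/-- A probability distribution on a finite set. -/
def IsDist {Λ : Type} [Fintype Λ] (D : Λ → ℝ) : Prop :=
  (∀ a, 0 ≤ D a) ∧ ∑ a, D a = 1

/-- A flat distribution: uniform over its support. -/
def IsFlat {Λ : Type} [Fintype Λ] (D : Λ → ℝ) : Prop :=
  ∀ a b, D a ≠ 0 → D b ≠ 0 → D a = D b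

/-- Min-entropy `H∞(D) = -log₂ max_a D(a)`. -/
noncomputable def minEntropy {Λ : Type} [Fintype Λ] (D : Λ → ℝ) : ℝ :=
  - Real.logb 2 (⨆ a, D a)

/-- A POVM indexed by `Λ`: positive semidefinite operators summing to the identity. -/
def IsPOVM {Λ ι : Type} [Fintype Λ] [Fintype ι] [DecidableEq ι]
    (F : Λ → Matrix ι ι ℂ) : Prop :=
  (∀ x, (F x).PosSemidef) ∧ ∑ x, F x = 1

/-- Optimal probability of guessing `x ∼ X` from the encoding `ρ(x)`. -/
noncomputable def guessProb {Λ ι : Type} [Fintype Λ] [Fintype ι] [DecidableEq ι]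
    (X : Λ → ℝ) (ρ : Λ → Matrix ι ι ℂ) : ℝ :=
  sSup {p : ℝ | ∃ F : Λ → Matrix ι ι ℂ,
    IsPOVM F ∧ p = ∑ x, X x * ((F x * ρ x).trace).re}

/-- Conditional min-entropy `H∞(X;ρ) = -log₂ guessProb`. -/
noncomputable def condMinEntropy {Λ ι : Type} [Fintype Λ] [Fintype ι] [DecidableEq ι]
    (X : Λ → ℝ) (ρ : Λ → Matrix ι ι ℂ) : ℝ :=
  - Real.logb 2 (guessProb X ρ)

/-- The cq-state `U ∘ E(X,U) ∘ ρ(X)`, represented by its (subnormalized) blocks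
indexed by the classical value `(y, z)`. -/
noncomputable def extState {Λ Y Z ι : Type} [Fintype Λ] [Fintype Y] [Fintype Z]
    [DecidableEq Z] [Fintype ι] [DecidableEq ι]
    (E : Λ → Y → Z) (X : Λ → ℝ) (ρ : Λ → Matrix ι ι ℂ) :
    Y × Z → Matrix ι ι ℂ :=
  fun yz => ((Fintype.card Y : ℝ))⁻¹ • ∑ x, if E x yz.1 = yz.2 then X x • ρ x else 0

/-- The ideal state `U × ρ̄_X`: uniform classical part, average encoding. -/
noncomputable def idealState (Y Z : Type) [Fintype Y] [Fintype Z]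
    {Λ ι : Type} [Fintype Λ] [Fintype ι] [DecidableEq ι]
    (X : Λ → ℝ) (ρ : Λ → Matrix ι ι ℂ) : Y × Z → Matrix ι ι ℂ :=
  fun _ => ((Fintype.card Y * Fintype.card Z : ℝ))⁻¹ • ∑ x, X x • ρ x

/-- Trace distance between two cq states given by their blocks. -/
noncomputable def cqDist {Z ι : Type} [Fintype Z] [Fintype ι] [DecidableEq ι]
    (σ τ : Z → Matrix ι ι ℂ) : ℝ :=
  (∑ z, traceNorm (σ z - τ z)) / 2

/-- The extractor error `‖U ∘ E(X,U) ∘ ρ(X) − U × ρ̄_X‖_tr`. -/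
noncomputable def extError {Λ Y Z ι : Type} [Fintype Λ] [Fintype Y] [Fintype Z]
    [DecidableEq Z] [Fintype ι] [DecidableEq ι]
    (E : Λ → Y → Z) (X : Λ → ℝ) (ρ : Λ → Matrix ι ι ℂ) : ℝ :=
  cqDist (extState E X ρ) (idealState Y Z X ρ)

/-- Statistical (variational) distance between distributions. -/
noncomputable def statDist {Λ : Type} [Fintype Λ] (D₁ D₂ : Λ → ℝ) : ℝ :=
  (∑ a, |D₁ a - D₂ a|) / 2

/-- The output distribution `(U_d, C(X,U_d))` of a condenser. -/
noncomputable def condOut {n d n' : ℕ} (C : BS n → BS d → BS n') (X : BS n → ℝ) :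
    BS d × BS n' → ℝ :=
  fun p => ((2 ^ d : ℝ))⁻¹ * ∑ x, if C x p.1 = p.2 then X x else 0

/-- `C` is an `(n,k₁) →_ε (n',k₂)` strong condenser. -/
def IsStrongCondenser {n d n' : ℕ} (C : BS n → BS d → BS n')
    (k₁ k₂ : ℝ) (ε : ℝ) : Prop :=
  ∀ X : BS n → ℝ, IsDist X → k₁ ≤ minEntropy X →
    ∃ D' : BS d × BS n' → ℝ, IsDist D' ∧ (d : ℝ) + k₂ ≤ minEntropy D' ∧
      statDist (condOut C X) D' ≤ ε

/-- The classical pure state `|y⟩⟨y|`. -/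
noncomputable def ketbra {d : ℕ} (y : BS d) : Matrix (BS d) (BS d) ℂ :=
  Matrix.of fun a b => if a = y ∧ b = y then 1 else 0

/-- The extension `ℰ ⊗ id_N` of a linear map on matrices. -/
noncomputable def extendMap {ι κ : Type} [Fintype ι] [Fintype κ]
    (ℰ : Matrix ι ι ℂ →ₗ[ℂ] Matrix κ κ ℂ) (N : ℕ)
    (A : Matrix (ι × Fin N) (ι × Fin N) ℂ) : Matrix (κ × Fin N) (κ × Fin N) ℂ :=
  Matrix.of fun p q => ℰ (Matrix.of fun i j => A (i, p.2) (j, q.2)) p.1 q.1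

/-- Completely positive trace-preserving map. -/
def IsCPTP {ι κ : Type} [Fintype ι] [Fintype κ]
    (ℰ : Matrix ι ι ℂ →ₗ[ℂ] Matrix κ κ ℂ) : Prop :=
  (∀ (N : ℕ) (A : Matrix (ι × Fin N) (ι × Fin N) ℂ), A.PosSemidef →
      (extendMap ℰ N A).PosSemidef) ∧
  (∀ A : Matrix ι ι ℂ, (ℰ A).trace = A.trace)


theorem _root_.Matrix.PosSemidef.trace_mul_nonneg {ι : Type} [Fintype ι] [DecidableEq ι]
    {A B : Matrix ι ι ℂ} (hA : A.PosSemidef) (hB : B.PosSemidef) : 0 ≤ (A * B).trace := by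
  open scoped MatrixOrder in
  obtain ⟨S, hS, hSS⟩ : ∃ S : Matrix ι ι ℂ, S.PosSemidef ∧ S * S = A :=
    ⟨CFC.sqrt A, Matrix.nonneg_iff_posSemidef.mp (CFC.sqrt_nonneg A),
      CFC.sqrt_mul_sqrt_self A hA.nonneg⟩
  have hSBS : (S * B * S.conjTranspose).PosSemidef := hB.mul_mul_conjTranspose_same S
  rw [hS.1.eq] at hSBS
  calc (0 : ℂ) ≤ (S * B * S).trace := hSBS.trace_nonneg
    _ = (A * B).trace := by rw [← hSS, Matrix.trace_mul_comm, Matrix.mul_assoc]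

section POVM

variable {Λ ι : Type} [Fintype Λ] [Fintype ι] [DecidableEq ι] {F : Λ → Matrix ι ι ℂ}

theorem IsPOVM.posSemidef_one_sub (hF : IsPOVM F) (x : Λ) : (1 - F x).PosSemidef := by
  classical
  rw [← hF.2, ← Finset.add_sum_erase _ _ (Finset.mem_univ x), add_sub_cancel_left]
  exact Matrix.posSemidef_sum _ fun y _ => hF.1 y

theorem IsPOVM.re_trace_mul_nonneg (hF : IsPOVM F) {ρ : Matrix ι ι ℂ} (hρ : IsDensity ρ)
    (x : Λ) : 0 ≤ (F x * ρ).trace.re :=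
  (Complex.nonneg_iff.mp ((hF.1 x).trace_mul_nonneg hρ.1)).1

theorem IsPOVM.re_trace_mul_le_one (hF : IsPOVM F) {ρ : Matrix ι ι ℂ} (hρ : IsDensity ρ)
    (x : Λ) : (F x * ρ).trace.re ≤ 1 := by
  have h := (Complex.nonneg_iff.mp ((hF.posSemidef_one_sub x).trace_mul_nonneg hρ.1)).1
  rw [Matrix.sub_mul, Matrix.one_mul, Matrix.trace_sub, hρ.2, Complex.sub_re,
    Complex.one_re] at h
  linarith

theorem isPOVM_indicator [DecidableEq Λ] (x₀ : Λ) :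
    IsPOVM (fun x : Λ => if x = x₀ then (1 : Matrix ι ι ℂ) else 0) := by
  refine ⟨fun x => ?_, by simp⟩
  dsimp only
  split_ifs
  exacts [Matrix.PosSemidef.one, Matrix.PosSemidef.zero]

theorem isPOVM_uniform_mix {Λ₁ Λ₂ : Type} [Fintype Λ₁] [Nonempty Λ₁] [Fintype Λ₂]
    {G : Λ₁ → Λ₂ → Matrix ι ι ℂ} (hG : ∀ x₁, IsPOVM (G x₁)) :
    IsPOVM (fun p : Λ₁ × Λ₂ => (Fintype.card Λ₁ : ℝ)⁻¹ • G p.1 p.2) := by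
  refine ⟨fun p => ((hG p.1).1 p.2).smul (by positivity), ?_⟩
  rw [Fintype.sum_prod_type]
  simp only [← Finset.smul_sum, (hG _).2, Finset.sum_const, Finset.card_univ]
  rw [← Nat.cast_smul_eq_nsmul ℝ, smul_smul,
    inv_mul_cancel₀ (Nat.cast_ne_zero.mpr Fintype.card_ne_zero), one_smul]

end POVM

theorem sum_sSup_le_of_forall_mem {κ : Type} [Fintype κ] {S : κ → Set ℝ}
    (hS : ∀ i, (S i).Nonempty) {C : ℝ} (h : ∀ f : κ → ℝ, (∀ i, f i ∈ S i) → ∑ i, f i ≤ C) :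
    ∑ i, sSup (S i) ≤ C := by
  refine le_of_forall_pos_le_add fun ε hε => ?_
  set δ := ε / (Fintype.card κ + 1)
  have hδ : 0 < δ := by positivity
  have hcard : Fintype.card κ * δ ≤ ε := by
    rw [mul_div_assoc', div_le_iff₀ (by positivity)]
    nlinarith
  choose f hfS hf using fun i => exists_lt_of_lt_csSup (hS i) (sub_lt_self (sSup (S i)) hδ)
  calc ∑ i, sSup (S i) ≤ ∑ i, (f i + δ) := Finset.sum_le_sum fun i _ => by linarith [hf i]
    _ = ∑ i, f i + Fintype.card κ * δ := by
      rw [Finset.sum_add_distrib, Finset.sum_const, nsmul_eq_mul, Finset.card_univ]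
    _ ≤ C + ε := add_le_add (h f hfS) hcard

section GuessProb

variable {Λ ι : Type} [Fintype Λ] [Fintype ι] [DecidableEq ι]
  {X : Λ → ℝ} {ρ : Λ → Matrix ι ι ℂ} {F : Λ → Matrix ι ι ℂ}

noncomputable def successProb (X : Λ → ℝ) (ρ F : Λ → Matrix ι ι ℂ) : ℝ :=
  ∑ x, X x * (F x * ρ x).trace.re

theorem successProb_nonneg (hX : ∀ x, 0 ≤ X x) (hρ : ∀ x, IsDensity (ρ x)) (hF : IsPOVM F) :
    0 ≤ successProb X ρ F :=
  Finset.sum_nonneg fun x _ => mul_nonneg (hX x) (hF.re_trace_mul_nonneg (hρ x) x)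

theorem successProb_le_sum (hX : ∀ x, 0 ≤ X x) (hρ : ∀ x, IsDensity (ρ x)) (hF : IsPOVM F) :
    successProb X ρ F ≤ ∑ x, X x :=
  Finset.sum_le_sum fun x _ => mul_le_of_le_one_right (hX x) (hF.re_trace_mul_le_one (hρ x) x)

omit [DecidableEq ι] in
theorem successProb_const_mul (c : ℝ) :
    successProb (fun x => c * X x) ρ F = c * successProb X ρ F := by
  simp only [successProb, Finset.mul_sum, mul_assoc]

theorem successProb_le_guessProb (hX : ∀ x, 0 ≤ X x) (hρ : ∀ x, IsDensity (ρ x))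
    (hF : IsPOVM F) : successProb X ρ F ≤ guessProb X ρ :=
  le_csSup ⟨∑ x, X x, by rintro _ ⟨G, hG, rfl⟩; exact successProb_le_sum hX hρ hG⟩ ⟨F, hF, rfl⟩

theorem guessProb_nonneg (hX : ∀ x, 0 ≤ X x) (hρ : ∀ x, IsDensity (ρ x)) :
    0 ≤ guessProb X ρ :=
  Real.sSup_nonneg (by rintro _ ⟨G, hG, rfl⟩; exact successProb_nonneg hX hρ hG)

theorem le_guessProb (hX : ∀ x, 0 ≤ X x) (hρ : ∀ x, IsDensity (ρ x)) (x₀ : Λ) :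
    X x₀ ≤ guessProb X ρ := by
  classical
  calc X x₀ = successProb X ρ (fun x => if x = x₀ then 1 else 0) := by
        simp [successProb, ite_mul, apply_ite, (hρ x₀).2]
    _ ≤ guessProb X ρ := successProb_le_guessProb hX hρ (isPOVM_indicator x₀)

theorem guessProb_const_mul {c : ℝ} (hc : 0 ≤ c) :
    guessProb (fun x => c * X x) ρ = c * guessProb X ρ := by
  rw [guessProb, guessProb, ← smul_eq_mul, ← Real.sSup_smul_of_nonneg hc]
  congr 1
  ext p
  simp only [Set.mem_smul_set, Set.mem_ofPred_eq]
  constructor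
  · rintro ⟨F, hF, rfl⟩
    exact ⟨_, ⟨F, hF, rfl⟩, (successProb_const_mul c).symm⟩
  · rintro ⟨_, ⟨F, hF, rfl⟩, rfl⟩
    exact ⟨F, hF, (successProb_const_mul c).symm⟩

theorem guessProb_le_rpow_neg {k : ℝ} (hk : k ≤ condMinEntropy X ρ) :
    guessProb X ρ ≤ 2 ^ (-k) := by
  rcases le_or_gt (guessProb X ρ) 0 with h | h
  · exact h.trans (by positivity)
  · rw [← Real.logb_le_iff_le_rpow one_lt_two h]
    rw [condMinEntropy] at hk
    linarith

theorem rpow_neg_le_guessProb {r : ℝ} (hpos : 0 < guessProb X ρ)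
    (hr : condMinEntropy X ρ ≤ r) : 2 ^ (-r) ≤ guessProb X ρ := by
  rw [← Real.le_logb_iff_rpow_le one_lt_two hpos]
  rw [condMinEntropy] at hr
  linarith

theorem sum_mul_rpow_neg_le_guessProb {r : ℝ} (hX : ∀ x, 0 ≤ X x)
    (hρ : ∀ x, IsDensity (ρ x)) (hsum : 0 < ∑ x, X x)
    (hr : condMinEntropy (fun x => X x / ∑ x', X x') ρ ≤ r) :
    (∑ x, X x) * 2 ^ (-r) ≤ guessProb X ρ := by
  set P := ∑ x, X x
  have hscale : guessProb X ρ = P * guessProb (fun x => X x / P) ρ := by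
    rw [← guessProb_const_mul hsum.le]
    simp only [mul_div_cancel₀ _ hsum.ne']
  obtain ⟨x₀, -, hx₀⟩ :=
    Finset.exists_lt_of_sum_lt (by simpa using hsum : ∑ _x : Λ, (0 : ℝ) < P)
  have hpos : 0 < guessProb (fun x => X x / P) ρ :=
    (div_pos hx₀ hsum).trans_le (le_guessProb (fun x => div_nonneg (hX x) hsum.le) hρ x₀)
  rw [hscale]
  exact mul_le_mul_of_nonneg_left (rpow_neg_le_guessProb hpos hr) hsum.le

end GuessProb

section Prefix

variable {Λ₁ Λ₂ ι : Type} [Fintype Λ₁] [Fintype Λ₂] [Fintype ι] [DecidableEq ι]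
  {X : Λ₁ × Λ₂ → ℝ} {ρ : Λ₁ × Λ₂ → Matrix ι ι ℂ}

omit [DecidableEq ι] in
theorem successProb_uniform_mix (G : Λ₁ → Λ₂ → Matrix ι ι ℂ) :
    successProb X ρ (fun p => (Fintype.card Λ₁ : ℝ)⁻¹ • G p.1 p.2) =
      (Fintype.card Λ₁ : ℝ)⁻¹ *
        ∑ x₁, successProb (fun x₂ => X (x₁, x₂)) (fun x₂ => ρ (x₁, x₂)) (G x₁) := by
  simp only [successProb, Fintype.sum_prod_type, Finset.mul_sum, Matrix.smul_mul,
    Matrix.trace_smul, Complex.real_smul, Complex.re_ofReal_mul]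
  exact Finset.sum_congr rfl fun _ _ => Finset.sum_congr rfl fun _ _ => by ring

theorem sum_guessProb_le_card_mul [Nonempty Λ₁] [Nonempty Λ₂] (hX : ∀ p, 0 ≤ X p)
    (hρ : ∀ p, IsDensity (ρ p)) :
    ∑ x₁, guessProb (fun x₂ => X (x₁, x₂)) (fun x₂ => ρ (x₁, x₂)) ≤
      Fintype.card Λ₁ * guessProb X ρ := by
  classical
  refine sum_sSup_le_of_forall_mem (S := fun x₁ => {p | ∃ F, IsPOVM F ∧
      p = successProb (fun x₂ => X (x₁, x₂)) (fun x₂ => ρ (x₁, x₂)) F})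
    (fun _ => ⟨_, _, isPOVM_indicator (Classical.arbitrary Λ₂), rfl⟩) fun f hf => ?_
  choose G hG hfG using hf
  have hcard : (Fintype.card Λ₁ : ℝ) ≠ 0 := Nat.cast_ne_zero.mpr Fintype.card_ne_zero
  calc ∑ x₁, f x₁ = Fintype.card Λ₁ *
        successProb X ρ (fun p => (Fintype.card Λ₁ : ℝ)⁻¹ • G p.1 p.2) := by
        rw [successProb_uniform_mix, mul_inv_cancel_left₀ hcard]
        exact Finset.sum_congr rfl fun x₁ _ => hfG x₁
    _ ≤ Fintype.card Λ₁ * guessProb X ρ := by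
      gcongr
      exact successProb_le_guessProb hX hρ (isPOVM_uniform_mix hG)

end Prefix

/-- Prefix lemma: the probability that a prefix `x₁` is bad (the conditional
source given `x₁` has conditional min-entropy at most `r`) is at most `2^ℓ 2^r 2^{-k}`. -/
theorem stmt3 {ℓ n₂ dm : ℕ} (k r : ℝ)
    (X : BS ℓ × BS n₂ → ℝ) (hX : IsDist X)
    (ρ : BS ℓ × BS n₂ → Matrix (Fin dm) (Fin dm) ℂ) (hρ : ∀ p, IsDensity (ρ p))
    (hk : k ≤ condMinEntropy X ρ)
    (B : Finset (BS ℓ))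
    (hB : ∀ x₁ ∈ B, 0 < ∑ x₂, X (x₁, x₂) ∧
      condMinEntropy (fun x₂ => X (x₁, x₂) / ∑ x₂', X (x₁, x₂'))
        (fun x₂ => ρ (x₁, x₂)) ≤ r) :
    ∑ x₁ ∈ B, ∑ x₂, X (x₁, x₂) ≤ (2 : ℝ) ^ ℓ * (2 : ℝ) ^ r * (2 : ℝ) ^ (-k) := by
  have hcard : (Fintype.card (BS ℓ) : ℝ) = 2 ^ ℓ := by simp
  have key : (∑ x₁ ∈ B, ∑ x₂, X (x₁, x₂)) * (2 : ℝ) ^ (-r) ≤ 2 ^ ℓ * 2 ^ (-k) :=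
    calc (∑ x₁ ∈ B, ∑ x₂, X (x₁, x₂)) * (2 : ℝ) ^ (-r)
        ≤ ∑ x₁ ∈ B, guessProb (fun x₂ => X (x₁, x₂)) (fun x₂ => ρ (x₁, x₂)) := by
          rw [Finset.sum_mul]
          exact Finset.sum_le_sum fun x₁ hx₁ => sum_mul_rpow_neg_le_guessProb
            (fun _ => hX.1 _) (fun _ => hρ _) (hB x₁ hx₁).1 (hB x₁ hx₁).2
      _ ≤ ∑ x₁, guessProb (fun x₂ => X (x₁, x₂)) (fun x₂ => ρ (x₁, x₂)) :=
          Finset.sum_le_sum_of_subset_of_nonneg (Finset.subset_univ B) fun _ _ _ =>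
            guessProb_nonneg (fun _ => hX.1 _) (fun _ => hρ _)
      _ ≤ 2 ^ ℓ * guessProb X ρ := hcard ▸ sum_guessProb_le_card_mul hX.1 hρ
      _ ≤ 2 ^ ℓ * 2 ^ (-k) := by gcongr; exact guessProb_le_rpow_neg hk
  rw [Real.rpow_neg zero_le_two, ← div_eq_mul_inv, div_le_iff₀ (by positivity)] at key
  linarith

end QExt
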